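/- arXiv:1505.07969 — 2 statements merged into one kernel-verified Lean document; each statement's English description precedes it below -/
import Mathlib

section
/- If at a point (x,y) with y ≠ 0 the fundamental tensor g_{ij}(x,y) = ½ ∂̇_i∂̇_j (L²) is positive definite and L*(x,y) > 0, then the transformed fundamental tensor g*_{ij}(x,y) = ½ ∂̇_i∂̇_j (L*²) is positive definite; in particular det(g*_{ij}) ≠ 0. -/
/-!
Write `F = L x`, `H` for its Hessian and `c = exp (σ x)`, so that `L* x = c F + β` with `β` linear.
Then `g = F H + dF ⊗ dF` and `g* = c L* H + dL* ⊗ dL*`. Differentiating Euler's relation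
`dF_z z = F z` gives `dF_y y = F y` and `H(·, y) = H(y, ·) = 0`, so the component
`u = w - (dF_y w / F y) • y` of `w` along `ker dF_y` has `H(w, w) = H(u, u) = g(u, u) / F y`.
Thus `H(w, w) ≥ 0` with equality only on multiples of `y`, where the square term is
`dL*_y y ^ 2 = L*(y) ^ 2 > 0`.
-/

open Real

/-- Second partial derivative with respect to the `y`-coordinates:
`∂̇_i ∂̇_j f` evaluated at `y`. -/
noncomputable def pdy2 {n : ℕ} (f : (Fin n → ℝ) → ℝ) (i j : Fin n) (y : Fin n → ℝ) : ℝ :=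
  fderiv ℝ (fun z => fderiv ℝ f z (Pi.single j 1)) y (Pi.single i 1)

/-- The fundamental (metric) tensor `g_{ij} = ½ ∂̇_i∂̇_j (L²)` of a Finsler metric `L`. -/
noncomputable def gten {n : ℕ} (L : (Fin n → ℝ) → (Fin n → ℝ) → ℝ)
    (x : Fin n → ℝ) (i j : Fin n) (y : Fin n → ℝ) : ℝ :=
  (1 / 2) * pdy2 (fun z => (L x z) ^ 2) i j y

/-- The Randers conformal change `L*(x,y) = e^{σ(x)} L(x,y) + β(x,y)`. -/
noncomputable def RandersChange {n : ℕ} (L : (Fin n → ℝ) → (Fin n → ℝ) → ℝ)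
    (σ : (Fin n → ℝ) → ℝ) (b : (Fin n → ℝ) → (Fin n → ℝ))
    (x y : Fin n → ℝ) : ℝ :=
  Real.exp (σ x) * L x y + ∑ j, b x j * y j

open Filter Topology

section Calculus

variable {E : Type*} [NormedAddCommGroup E] [NormedSpace ℝ E] {f : E → ℝ} {y : E}

theorem fderiv_fderiv_sq_apply (hf : ContDiffAt ℝ 2 f y) (v w : E) :
    fderiv ℝ (fderiv ℝ fun z => f z ^ 2) y v w =
      2 * (f y * fderiv ℝ (fderiv ℝ f) y v w + fderiv ℝ f y v * fderiv ℝ f y w) := by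
  have hdf : DifferentiableAt ℝ (fderiv ℝ f) y :=
    (hf.fderiv_right (m := 1) (by norm_num)).differentiableAt (by norm_num)
  have hfy : DifferentiableAt ℝ f y := hf.differentiableAt (by norm_num)
  have hsq : fderiv ℝ (fun z => f z ^ 2) =ᶠ[𝓝 y] fun z => (2 * f z) • fderiv ℝ f z := by
    filter_upwards [hf.eventually (by simp)] with z hz
    rw [fderiv_fun_pow 2 (hz.differentiableAt (by norm_num))]
    simp
  rw [hsq.fderiv_eq, fderiv_fun_smul (hfy.const_mul 2) hdf, fderiv_const_mul hfy]
  simp only [add_apply, smul_apply, ContinuousLinearMap.smulRight_apply, smul_eq_mul]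
  ring

theorem fderiv_const_mul_add_clm (c : ℝ) (ℓ : E →L[ℝ] ℝ) {z : E} (hf : DifferentiableAt ℝ f z) :
    fderiv ℝ (fun z => c * f z + ℓ z) z = c • fderiv ℝ f z + ℓ := by
  rw [fderiv_fun_add (hf.const_mul c) ℓ.differentiableAt, fderiv_const_mul hf, ℓ.fderiv]

theorem fderiv_fderiv_const_mul_add_clm (c : ℝ) (ℓ : E →L[ℝ] ℝ) (hf : ContDiffAt ℝ 2 f y) :
    fderiv ℝ (fderiv ℝ fun z => c * f z + ℓ z) y = c • fderiv ℝ (fderiv ℝ f) y := by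
  have hdf : DifferentiableAt ℝ (fderiv ℝ f) y :=
    (hf.fderiv_right (m := 1) (by norm_num)).differentiableAt (by norm_num)
  have h : fderiv ℝ (fun z => c * f z + ℓ z) =ᶠ[𝓝 y] fun z => c • fderiv ℝ f z + ℓ := by
    filter_upwards [hf.eventually (by simp)] with z hz
    exact fderiv_const_mul_add_clm c ℓ (hz.differentiableAt (by norm_num))
  rw [h.fderiv_eq, fderiv_add_const, fderiv_fun_const_smul hdf]

theorem fderiv_apply_self_of_homogeneous (hf : DifferentiableAt ℝ f y)
    (hhom : ∀ t : ℝ, 0 < t → f (t • y) = t * f y) :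
    fderiv ℝ f y y = f y := by
  have hchain : HasDerivAt (fun t : ℝ => f (t • y)) (fderiv ℝ f y y) 1 := by
    have hf' : HasFDerivAt f (fderiv ℝ f y) ((1 : ℝ) • y) := by simpa using hf.hasFDerivAt
    have hray : HasDerivAt (fun t : ℝ => t • y) y 1 := by
      simpa using (hasDerivAt_id (1 : ℝ)).smul_const y
    exact hf'.comp_hasDerivAt 1 hray
  have hlin : HasDerivAt (fun t : ℝ => f (t • y)) (f y) 1 := by
    have hid : HasDerivAt (fun t : ℝ => t * f y) (f y) 1 := by
      simpa using (hasDerivAt_id (1 : ℝ)).mul_const (f y)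
    refine hid.congr_of_eventuallyEq ?_
    filter_upwards [eventually_gt_nhds one_pos] with t ht
    exact hhom t ht
  exact hchain.unique hlin

theorem fderiv_fderiv_apply_self_of_homogeneous (hf : ContDiffAt ℝ 2 f y)
    (hhom : ∀ᶠ z in 𝓝 y, ∀ t : ℝ, 0 < t → f (t • z) = t * f z) (v : E) :
    fderiv ℝ (fderiv ℝ f) y v y = 0 := by
  have hdf : DifferentiableAt ℝ (fderiv ℝ f) y :=
    (hf.fderiv_right (m := 1) (by norm_num)).differentiableAt (by norm_num)
  have heuler : (fun z => fderiv ℝ f z z) =ᶠ[𝓝 y] f := by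
    filter_upwards [hf.eventually (by simp), hhom] with z hz hzhom
    exact fderiv_apply_self_of_homogeneous (hz.differentiableAt (by norm_num)) hzhom
  have hderiv := (hdf.hasFDerivAt.clm_apply (hasFDerivAt_id y)).congr_of_eventuallyEq
    heuler.symm
  have := congrArg (· v) (hderiv.unique (hf.differentiableAt (by norm_num)).hasFDerivAt)
  simpa using this

theorem fderiv_fderiv_self_apply_of_homogeneous (hf : ContDiffAt ℝ 2 f y)
    (hhom : ∀ᶠ z in 𝓝 y, ∀ t : ℝ, 0 < t → f (t • z) = t * f z) (v : E) :
    fderiv ℝ (fderiv ℝ f) y y v = 0 := by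
  rw [(hf.isSymmSndFDerivAt (by simp)).eq]
  exact fderiv_fderiv_apply_self_of_homogeneous hf hhom v

end Calculus

theorem randers_quadratic_form_pos {E : Type*} [AddCommGroup E] [Module ℝ E]
    {H : LinearMap.BilinForm ℝ E} {d ℓ : E →ₗ[ℝ] ℝ} {y : E} {Fy c : ℝ}
    (hFy : 0 < Fy) (hc : 0 < c) (hdy : d y = Fy) (hHy : ∀ v, H v y = 0) (hyH : ∀ v, H y v = 0)
    (hpos : ∀ w, w ≠ 0 → 0 < Fy * H w w + d w ^ 2) (hstar : 0 < c * Fy + ℓ y)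
    {w : E} (hw : w ≠ 0) :
    0 < (c * Fy + ℓ y) * (c * H w w) + (c * d w + ℓ w) ^ 2 := by
  set t := d w / Fy
  set u := w - t • y
  have hdu : d u = 0 := by
    simp only [u, t, map_sub, map_smul, hdy, smul_eq_mul]
    field_simp
    ring
  have hHu : H w w = H u u := by
    simp [u, hHy, hyH]
  rcases eq_or_ne u 0 with hu | hu
  · have hwy : w = t • y := sub_eq_zero.mp hu
    have ht : t ≠ 0 := by
      rintro ht
      exact hw (by simpa [ht] using hwy)
    have hlin : c * d w + ℓ w = t * (c * Fy + ℓ y) := by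
      rw [hwy, map_smul, map_smul, hdy, smul_eq_mul, smul_eq_mul]
      ring
    have hH : H w w = 0 := by simp [hHu, hu]
    rw [hH, hlin, mul_zero, mul_zero, zero_add]
    exact pow_two_pos_of_ne_zero (mul_ne_zero ht hstar.ne')
  · have hgu : 0 < Fy * H u u := by simpa [hdu] using hpos u hu
    have hH : 0 < H w w := hHu ▸ pos_of_mul_pos_right hgu hFy.le
    positivity

section Coordinates

variable {n : ℕ}

theorem LinearMap.sum_sum_apply_single_mul_mul {ι R : Type*} [Fintype ι] [DecidableEq ι]
    [CommSemiring R] (B : (ι → R) →ₗ[R] (ι → R) →ₗ[R] R) (w : ι → R) :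
    ∑ i, ∑ j, B (Pi.single i 1) (Pi.single j 1) * w i * w j = B w w := by
  conv_rhs => rw [← Matrix.toLinearMap₂'_toMatrix' (R := R) B, Matrix.toLinearMap₂'_apply]
  simp only [LinearMap.toMatrix₂'_apply, smul_eq_mul]
  exact Finset.sum_congr rfl fun i _ => Finset.sum_congr rfl fun j _ => by ring

theorem pdy2_eq_fderiv_fderiv {f : (Fin n → ℝ) → ℝ} {y : Fin n → ℝ}
    (hf : DifferentiableAt ℝ (fderiv ℝ f) y) (i j : Fin n) :
    pdy2 f i j y = fderiv ℝ (fderiv ℝ f) y (Pi.single i 1) (Pi.single j 1) := by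
  rw [pdy2, fderiv_clm_apply hf (differentiableAt_const _)]
  simp

theorem sum_sum_gten_mul_mul {Φ : (Fin n → ℝ) → (Fin n → ℝ) → ℝ} {x y : Fin n → ℝ}
    (hΦ : ContDiffAt ℝ 2 (Φ x) y) (w : Fin n → ℝ) :
    ∑ i, ∑ j, gten Φ x i j y * w i * w j =
      Φ x y * fderiv ℝ (fderiv ℝ (Φ x)) y w w + fderiv ℝ (Φ x) y w ^ 2 := by
  have hsq : DifferentiableAt ℝ (fderiv ℝ fun z => Φ x z ^ 2) y :=
    ((hΦ.pow 2).fderiv_right (m := 1) (by norm_num)).differentiableAt (by norm_num)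
  set B := (1 / 2 : ℝ) • fderiv ℝ (fderiv ℝ fun z => Φ x z ^ 2) y
  calc ∑ i, ∑ j, gten Φ x i j y * w i * w j
      = ∑ i, ∑ j, B (Pi.single i 1) (Pi.single j 1) * w i * w j := by
        simp [B, gten, pdy2_eq_fderiv_fderiv hsq]
    _ = B w w := B.toLinearMap₁₂.sum_sum_apply_single_mul_mul w
    _ = _ := by
        simp only [B, smul_apply, smul_eq_mul, fderiv_fderiv_sq_apply hΦ]
        ring

open Matrix in
theorem Matrix.det_ne_zero_of_sum_sum_mul_mul_pos {ι : Type*} [Fintype ι] [DecidableEq ι]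
    {K : Type*} [Field K] [LinearOrder K] [IsStrictOrderedRing K] (M : Matrix ι ι K)
    (hM : ∀ w : ι → K, w ≠ 0 → 0 < ∑ i, ∑ j, M i j * w i * w j) :
    M.det ≠ 0 := by
  intro hdet
  obtain ⟨v, hv, hMv⟩ := Matrix.exists_mulVec_eq_zero_iff.mpr hdet
  have hquad : ∑ i, ∑ j, M i j * v i * v j = v ⬝ᵥ M *ᵥ v := by
    simp only [dotProduct, mulVec, Finset.mul_sum]
    exact Finset.sum_congr rfl fun i _ => Finset.sum_congr rfl fun j _ => by ring
  simpa [hquad, hMv] using hM v hv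

end Coordinates

theorem randers_conformal_posdef_general
    {n : ℕ} (U : Set (Fin n → ℝ))
    (L : (Fin n → ℝ) → (Fin n → ℝ) → ℝ)
    (hL : ContDiffOn ℝ (⊤ : ℕ∞)
      (fun p : (Fin n → ℝ) × (Fin n → ℝ) => L p.1 p.2)
      (U ×ˢ {y : Fin n → ℝ | y ≠ 0}))
    (hLpos : ∀ x ∈ U, ∀ y : Fin n → ℝ, y ≠ 0 → 0 < L x y)
    (hLhom : ∀ x ∈ U, ∀ y : Fin n → ℝ, y ≠ 0 → ∀ c : ℝ, 0 < c →
      L x (c • y) = c * L x y)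
    (σ : (Fin n → ℝ) → ℝ)
    (b : (Fin n → ℝ) → (Fin n → ℝ))
    (x : Fin n → ℝ) (hx : x ∈ U) (y : Fin n → ℝ) (hy : y ≠ 0)
    (hposdef : ∀ w : Fin n → ℝ, w ≠ 0 →
      0 < ∑ i, ∑ j, gten L x i j y * w i * w j)
    (hLstar : 0 < RandersChange L σ b x y) :
    (∀ w : Fin n → ℝ, w ≠ 0 →
      0 < ∑ i, ∑ j, gten (RandersChange L σ b) x i j y * w i * w j) ∧
    (Matrix.of fun i j => gten (RandersChange L σ b) x i j y).det ≠ 0 := by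
  have hF : ContDiffAt ℝ 2 (L x) y := by
    have hsmooth : ContDiffOn ℝ (⊤ : ℕ∞) (L x) {z | z ≠ 0} :=
      hL.comp (contDiffOn_const.prodMk contDiffOn_id) fun z hz => ⟨hx, hz⟩
    exact (hsmooth.contDiffAt (isOpen_ne.mem_nhds hy)).of_le (WithTop.coe_le_coe.mpr le_top)
  have hhom : ∀ᶠ z in 𝓝 y, ∀ t : ℝ, 0 < t → L x (t • z) = t * L x z := by
    filter_upwards [isOpen_ne.mem_nhds hy] with z hz using hLhom x hx z hz
  set ℓ : (Fin n → ℝ) →L[ℝ] ℝ := ∑ j, b x j • ContinuousLinearMap.proj j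
  have hstar : RandersChange L σ b x = fun z => exp (σ x) * L x z + ℓ z := by
    funext z
    simp [RandersChange, ℓ]
  have hF' : ContDiffAt ℝ 2 (RandersChange L σ b x) y := by
    rw [hstar]
    exact (contDiffAt_const.mul hF).add ℓ.contDiff.contDiffAt
  have hdF : DifferentiableAt ℝ (L x) y := hF.differentiableAt (by norm_num)
  have hpos : ∀ w : Fin n → ℝ, w ≠ 0 →
      0 < ∑ i, ∑ j, gten (RandersChange L σ b) x i j y * w i * w j := by
    intro w hw
    rw [sum_sum_gten_mul_mul hF', hstar, fderiv_const_mul_add_clm _ _ hdF,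
      fderiv_fderiv_const_mul_add_clm _ _ hF]
    simp only [smul_apply, add_apply, smul_eq_mul]
    refine randers_quadratic_form_pos (H := (fderiv ℝ (fderiv ℝ (L x)) y).toBilinForm)
      (hLpos x hx y hy) (exp_pos _)
      (fderiv_apply_self_of_homogeneous hdF (hLhom x hx y hy))
      (fderiv_fderiv_apply_self_of_homogeneous hF hhom)
      (fderiv_fderiv_self_apply_of_homogeneous hF hhom)
      (fun w hw => (sum_sum_gten_mul_mul hF w) ▸ hposdef w hw) (by simpa [hstar] using hLstar) hw
  exact ⟨hpos, Matrix.det_ne_zero_of_sum_sum_mul_mul_pos _ hpos⟩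

/-- If at a point `(x,y)` with `y ≠ 0` the fundamental tensor `g_{ij}` is positive definite
and `L*(x,y) > 0`, then the transformed fundamental tensor `g*_{ij}` is positive definite;
in particular `det(g*_{ij}) ≠ 0`. -/
theorem randers_conformal_posdef
    {n : ℕ} (U : Set (Fin n → ℝ)) (hU : IsOpen U)
    (L : (Fin n → ℝ) → (Fin n → ℝ) → ℝ)
    (hL : ContDiffOn ℝ (⊤ : ℕ∞)
      (fun p : (Fin n → ℝ) × (Fin n → ℝ) => L p.1 p.2)
      (U ×ˢ {y : Fin n → ℝ | y ≠ 0}))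
    (hLpos : ∀ x ∈ U, ∀ y : Fin n → ℝ, y ≠ 0 → 0 < L x y)
    (hLhom : ∀ x ∈ U, ∀ y : Fin n → ℝ, y ≠ 0 → ∀ c : ℝ, 0 < c →
      L x (c • y) = c * L x y)
    (σ : (Fin n → ℝ) → ℝ) (hσ : ContDiffOn ℝ (⊤ : ℕ∞) σ U)
    (b : (Fin n → ℝ) → (Fin n → ℝ)) (hb : ContDiffOn ℝ (⊤ : ℕ∞) b U)
    (x : Fin n → ℝ) (hx : x ∈ U) (y : Fin n → ℝ) (hy : y ≠ 0)
    (hposdef : ∀ w : Fin n → ℝ, w ≠ 0 →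
      0 < ∑ i, ∑ j, gten L x i j y * w i * w j)
    (hLstar : 0 < RandersChange L σ b x y) :
    (∀ w : Fin n → ℝ, w ≠ 0 →
      0 < ∑ i, ∑ j, gten (RandersChange L σ b) x i j y * w i * w j) ∧
    (Matrix.of fun i j => gten (RandersChange L σ b) x i j y).det ≠ 0 :=
  randers_conformal_posdef_general U L hL hLpos hLhom σ b x hx y hy hposdef hLstar
end

section
/- Fix (x,y) with y ≠ 0 and suppose L*(x,y) > 0. Let B_1, …, B_{n−1}, N ∈ ℝⁿ and v ∈ ℝ^{n−1} satisfy y = Σ_α v^α B_α, Σ_{i,j} g_{ij} B_α^i N^j = 0 for every α, and Σ_{i,j} g_{ij} N^i N^j = 1, and set N* = N / √(τ + (Σ_i b_i N^i)²). Then: (1) Σ_{i,j} g*_{ij} N*^i N*^j = 1; and (2) Σ_{i,j} g*_{ij} B_α^i N*^j = 0 for every α if and only if Σ_i b_i N^i = 0, in which case N* = N/√τ. In particular, if N* is g*-orthogonal to the tangent frame then the covector b is tangential (b_i N^i = 0). -/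
/-!
Write `F = L(x, ·)`, `ℓ = ∂̇F(y)` and `H = ∂̇∂̇F(y)`. Then `g = F H + ℓ ⊗ ℓ`, and since `L*` is
`e^σ F` plus a linear function of `y`, `g* = e^σ L* H + p ⊗ p` with `p = e^σ ℓ + b`.
Euler's theorem for the 1-homogeneous `F` gives `ℓ(y) = F` and `H y = 0`, so the
`g`-orthogonality of `N` to the frame, hence to `y`, forces `ℓ(N) = 0`. Therefore
`g*(u, N) = τ g(u, N) + p(u) b(N)` for every `u`: this gives `g*(N, N) = τ + b(N)²` and
`g*(B_α, N) = p(B_α) b(N)`, whose `v`-combination is `p(y) b(N) = L* b(N)` with `L* > 0`.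
-/

open Real

/-- The factor `τ = e^{σ} L*/L` of the Randers conformal change. -/
noncomputable def tauRC {n : ℕ} (L : (Fin n → ℝ) → (Fin n → ℝ) → ℝ)
    (σ : (Fin n → ℝ) → ℝ) (b : (Fin n → ℝ) → (Fin n → ℝ))
    (x y : Fin n → ℝ) : ℝ :=
  Real.exp (σ x) * RandersChange L σ b x y / L x y

open Matrix Filter Topology

section Algebra

variable {ι κ : Type*} [Fintype ι] [Fintype κ]

lemma sum_sum_mul_mul_eq_dotProduct_mulVec (A : ι → ι → ℝ) (u w : ι → ℝ) :
    ∑ i, ∑ j, A i j * u i * w j = u ⬝ᵥ of A *ᵥ w := by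
  simp only [dotProduct, mulVec, of_apply, Finset.mul_sum]
  exact Finset.sum_congr rfl fun i _ => Finset.sum_congr rfl fun j _ => by ring

lemma sum_smul_dotProduct (v : κ → ℝ) (B : κ → ι → ℝ) (w : ι → ℝ) :
    (∑ α, v α • B α) ⬝ᵥ w = ∑ α, v α * (B α ⬝ᵥ w) := by
  simp [sum_dotProduct, smul_dotProduct]

lemma dotProduct_smul_add_vecMulVec_mulVec (c : ℝ) (H : Matrix ι ι ℝ) (p q u w : ι → ℝ) :
    u ⬝ᵥ (c • H + vecMulVec p q) *ᵥ w = c * (u ⬝ᵥ H *ᵥ w) + (u ⬝ᵥ p) * (q ⬝ᵥ w) := by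
  simp only [add_mulVec, smul_mulVec, vecMulVec_mulVec, op_smul_eq_smul, dotProduct_add,
    dotProduct_smul, smul_eq_mul]
  ring

lemma dotProduct_normal_eq_zero {H : Matrix ι ι ℝ} {ℓ y N : ι → ℝ} {B : κ → ι → ℝ} {v : κ → ℝ}
    {F : ℝ} (hF : F ≠ 0) (hHy : y ᵥ* H = 0) (hℓy : y ⬝ᵥ ℓ = F) (hyB : y = ∑ α, v α • B α)
    (hBN : ∀ α, B α ⬝ᵥ (F • H + vecMulVec ℓ ℓ) *ᵥ N = 0) : ℓ ⬝ᵥ N = 0 := by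
  have hyN : y ⬝ᵥ (F • H + vecMulVec ℓ ℓ) *ᵥ N = 0 := by
    rw [hyB, sum_smul_dotProduct]
    simp [hBN]
  rw [dotProduct_smul_add_vecMulVec_mulVec, dotProduct_mulVec, hHy, zero_dotProduct, hℓy,
    mul_zero, zero_add] at hyN
  exact (mul_eq_zero.mp hyN).resolve_left hF

lemma dotProduct_mulVec_eq_of_dotProduct_eq_zero {H : Matrix ι ι ℝ} {ℓ N : ι → ℝ} {F : ℝ}
    (hF : F ≠ 0) (hℓN : ℓ ⬝ᵥ N = 0) (c : ℝ) (p u : ι → ℝ) :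
    u ⬝ᵥ (c • H + vecMulVec p p) *ᵥ N =
      c / F * (u ⬝ᵥ (F • H + vecMulVec ℓ ℓ) *ᵥ N) + (u ⬝ᵥ p) * (p ⬝ᵥ N) := by
  simp only [dotProduct_smul_add_vecMulVec_mulVec, hℓN, mul_zero, add_zero]
  field_simp

lemma unit_normal_of_dotProduct_mulVec_eq {g g' : Matrix ι ι ℝ} {p y N : ι → ℝ}
    {B : κ → ι → ℝ} {v : κ → ℝ} {τ Q : ℝ} (hτ : 0 < τ)
    (hrel : ∀ u, u ⬝ᵥ g' *ᵥ N = τ * (u ⬝ᵥ g *ᵥ N) + (u ⬝ᵥ p) * Q) (hpN : N ⬝ᵥ p = Q)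
    (hpy : y ⬝ᵥ p ≠ 0) (hyB : y = ∑ α, v α • B α) (hBN : ∀ α, B α ⬝ᵥ g *ᵥ N = 0)
    (hNN : N ⬝ᵥ g *ᵥ N = 1) :
    (√(τ + Q ^ 2))⁻¹ • N ⬝ᵥ g' *ᵥ ((√(τ + Q ^ 2))⁻¹ • N) = 1 ∧
      ((∀ α, B α ⬝ᵥ g' *ᵥ ((√(τ + Q ^ 2))⁻¹ • N) = 0) ↔ Q = 0) := by
  have hpos : 0 < τ + Q ^ 2 := by positivity
  have hsqrt : √(τ + Q ^ 2) ≠ 0 := (Real.sqrt_pos.mpr hpos).ne'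
  refine ⟨?_, ?_⟩
  · rw [mulVec_smul, dotProduct_smul, smul_dotProduct, hrel, hNN, hpN, smul_eq_mul, smul_eq_mul,
      ← mul_assoc, ← mul_inv, Real.mul_self_sqrt hpos.le]
    field_simp
  · have hBN' : ∀ α, B α ⬝ᵥ g' *ᵥ ((√(τ + Q ^ 2))⁻¹ • N) = 0 ↔ (B α ⬝ᵥ p) * Q = 0 := by
      intro α
      rw [mulVec_smul, dotProduct_smul, hrel, hBN, smul_eq_mul, mul_zero, zero_add]
      simp [hsqrt]
    simp_rw [hBN']
    refine ⟨fun h => (mul_eq_zero.mp ?_).resolve_left hpy, fun hQ α => by rw [hQ, mul_zero]⟩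
    rw [hyB, sum_smul_dotProduct, Finset.sum_mul]
    exact Finset.sum_eq_zero fun α _ => by rw [mul_assoc, h α, mul_zero]

end Algebra

section Euler

variable {E : Type*} [NormedAddCommGroup E] [NormedSpace ℝ E]

lemma fderiv_apply_self_of_homogeneous_s9 {ψ : E → ℝ} {y : E} (d : ℕ)
    (hψ : DifferentiableAt ℝ ψ y) (hhom : ∀ᶠ t in 𝓝 (1 : ℝ), ψ (t • y) = t ^ d * ψ y) :
    fderiv ℝ ψ y y = d * ψ y := by
  have hline : HasDerivAt (fun t : ℝ => ψ (t • y)) (fderiv ℝ ψ y y) 1 := by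
    have hy : HasFDerivAt ψ (fderiv ℝ ψ y) ((1 : ℝ) • y) := by
      simpa using hψ.hasFDerivAt
    have hs : HasDerivAt (fun t : ℝ => t • y) y 1 := by
      simpa using (hasDerivAt_id (1 : ℝ)).smul_const y
    exact hy.comp_hasDerivAt 1 hs
  have hpow : HasDerivAt (fun t : ℝ => t ^ d * ψ y) (d * ψ y) 1 := by
    simpa using (hasDerivAt_pow d (1 : ℝ)).mul_const (ψ y)
  exact hline.unique (hpow.congr_of_eventuallyEq hhom)

lemma fderiv_smul_of_homogeneous {φ : E → ℝ} (hφ : DifferentiableOn ℝ φ {0}ᶜ)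
    (hhom : ∀ z, z ≠ 0 → ∀ c : ℝ, 0 < c → φ (c • z) = c * φ z) {y : E} (hy : y ≠ 0)
    {t : ℝ} (ht : 0 < t) : fderiv ℝ φ (t • y) = fderiv ℝ φ y := by
  have hdiff : ∀ z, z ≠ 0 → DifferentiableAt ℝ φ z := fun z hz =>
    hφ.differentiableAt (isOpen_compl_singleton.mem_nhds hz)
  have hcomp : HasFDerivAt (fun z => φ (t • z)) ((fderiv ℝ φ (t • y)).comp (t • 1)) y :=
    (hdiff _ (smul_ne_zero ht.ne' hy)).hasFDerivAt.comp y ((1 : E →L[ℝ] E).hasFDerivAt.const_smul t)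
  have hscaled : HasFDerivAt (fun z => φ (t • z)) (t • fderiv ℝ φ y) y := by
    refine ((hdiff y hy).hasFDerivAt.const_mul t).congr_of_eventuallyEq ?_
    filter_upwards [isOpen_compl_singleton.mem_nhds hy] with z hz using hhom z hz t ht
  ext w
  simpa [ht.ne'] using congrArg (· w) (hcomp.unique hscaled)

end Euler

section Calculus

variable {n : ℕ}

noncomputable def grad (f : (Fin n → ℝ) → ℝ) (y : Fin n → ℝ) : Fin n → ℝ :=
  fun i => fderiv ℝ f y (Pi.single i 1)

noncomputable def hessian (f : (Fin n → ℝ) → ℝ) (y : Fin n → ℝ) : Matrix (Fin n) (Fin n) ℝ :=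
  of fun i j => pdy2 f i j y

lemma hessian_apply (f : (Fin n → ℝ) → ℝ) (y : Fin n → ℝ) (i j : Fin n) :
    hessian f y i j = grad (fun z => grad f z j) y i := rfl

lemma fderiv_apply_eq_grad_dotProduct (f : (Fin n → ℝ) → ℝ) (y w : Fin n → ℝ) :
    fderiv ℝ f y w = grad f y ⬝ᵥ w := by
  conv_lhs => rw [← (Pi.basisFun ℝ (Fin n)).sum_repr w]
  simp [map_sum, grad, dotProduct, mul_comm]

lemma ContDiffAt.differentiableAt_grad_apply {f : (Fin n → ℝ) → ℝ} {y : Fin n → ℝ}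
    (hf : ContDiffAt ℝ 2 f y) (j : Fin n) : DifferentiableAt ℝ (fun z => grad f z j) y :=
  ((hf.fderiv_right (m := 1) (by norm_num)).differentiableAt one_ne_zero).clm_apply
    (differentiableAt_const _)

lemma grad_const_mul_add_dotProduct {φ : (Fin n → ℝ) → ℝ} {z : Fin n → ℝ}
    (hφ : DifferentiableAt ℝ φ z) (c : ℝ) (a : Fin n → ℝ) :
    grad (fun w => c * φ w + a ⬝ᵥ w) z = c • grad φ z + a := by
  have ha : HasFDerivAt (fun w => a ⬝ᵥ w) (dotProductBilin ℝ ℝ a).toContinuousLinearMap z :=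
    (dotProductBilin ℝ ℝ a).toContinuousLinearMap.hasFDerivAt
  ext i
  simp [grad, ((hφ.hasFDerivAt.const_mul c).fun_add ha).fderiv]

lemma hessian_const_mul_add_dotProduct {φ : (Fin n → ℝ) → ℝ} {y : Fin n → ℝ}
    (hφ : ContDiffAt ℝ 2 φ y) (c : ℝ) (a : Fin n → ℝ) :
    hessian (fun w => c * φ w + a ⬝ᵥ w) y = c • hessian φ y := by
  ext i j
  have hgrad : (fun z => grad (fun w => c * φ w + a ⬝ᵥ w) z j) =ᶠ[𝓝 y]
      fun z => c * grad φ z j + a j := by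
    filter_upwards [hφ.eventually (by simp)] with z hz
    simp [grad_const_mul_add_dotProduct (hz.differentiableAt (by norm_num))]
  rw [hessian_apply, grad, hgrad.fderiv_eq,
    (((hφ.differentiableAt_grad_apply j).hasFDerivAt.const_mul c).add_const _).fderiv]
  simp [hessian_apply, grad]

lemma half_smul_hessian_sq {ψ : (Fin n → ℝ) → ℝ} {y : Fin n → ℝ} (hψ : ContDiffAt ℝ 2 ψ y) :
    (1 / 2 : ℝ) • hessian (fun z => ψ z ^ 2) y =
      ψ y • hessian ψ y + vecMulVec (grad ψ y) (grad ψ y) := by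
  ext i j
  have hgrad : (fun z => grad (fun w => ψ w ^ 2) z j) =ᶠ[𝓝 y]
      fun z => 2 * ψ z * grad ψ z j := by
    filter_upwards [hψ.eventually (by simp)] with z hz
    simp [grad, (hz.differentiableAt (by norm_num)).hasFDerivAt.pow 2 |>.fderiv]
  have hψy : DifferentiableAt ℝ ψ y := hψ.differentiableAt (by norm_num)
  rw [Matrix.smul_apply, hessian_apply, grad, hgrad.fderiv_eq,
    ((hψy.hasFDerivAt.const_mul 2).fun_mul (hψ.differentiableAt_grad_apply j).hasFDerivAt).fderiv]
  simp only [grad, _root_.add_apply, _root_.smul_apply, smul_eq_mul, Matrix.add_apply,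
    Matrix.smul_apply, hessian_apply, vecMulVec_apply]
  ring

lemma dotProduct_grad_self_of_homogeneous {φ : (Fin n → ℝ) → ℝ} {y : Fin n → ℝ}
    (hφ : DifferentiableAt ℝ φ y) (hhom : ∀ c : ℝ, 0 < c → φ (c • y) = c * φ y) :
    y ⬝ᵥ grad φ y = φ y := by
  have hline : ∀ᶠ t in 𝓝 (1 : ℝ), φ (t • y) = t ^ 1 * φ y := by
    filter_upwards [eventually_gt_nhds one_pos] with t ht using by rw [hhom t ht, pow_one]
  rw [dotProduct_comm, ← fderiv_apply_eq_grad_dotProduct,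
    fderiv_apply_self_of_homogeneous_s9 1 hφ hline,
    Nat.cast_one, one_mul]

lemma vecMul_hessian_self_of_homogeneous {φ : (Fin n → ℝ) → ℝ} (hφ : ContDiffOn ℝ 2 φ {0}ᶜ)
    (hhom : ∀ z, z ≠ 0 → ∀ c : ℝ, 0 < c → φ (c • z) = c * φ z) {y : Fin n → ℝ} (hy : y ≠ 0) :
    y ᵥ* hessian φ y = 0 := by
  have hφy : ContDiffAt ℝ 2 φ y := hφ.contDiffAt (isOpen_compl_singleton.mem_nhds hy)
  ext j
  have hline : ∀ᶠ t in 𝓝 (1 : ℝ), grad φ (t • y) j = t ^ 0 * grad φ y j := by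
    filter_upwards [eventually_gt_nhds one_pos] with t ht
    rw [grad, fderiv_smul_of_homogeneous (hφ.differentiableOn (by norm_num)) hhom hy ht,
      pow_zero, one_mul, grad]
  calc (y ᵥ* hessian φ y) j = grad (fun z => grad φ z j) y ⬝ᵥ y := by
        simp only [vecMul, dotProduct, hessian_apply, mul_comm]
    _ = 0 := by
        rw [← fderiv_apply_eq_grad_dotProduct,
          fderiv_apply_self_of_homogeneous_s9 0 (hφy.differentiableAt_grad_apply j) hline,
          Nat.cast_zero, zero_mul]

end Calculus

section Finsler

variable {n : ℕ} {L : (Fin n → ℝ) → (Fin n → ℝ) → ℝ} {x y : Fin n → ℝ}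

lemma contDiffOn_slice {U : Set (Fin n → ℝ)}
    (hL : ContDiffOn ℝ (⊤ : ℕ∞) (fun p : (Fin n → ℝ) × (Fin n → ℝ) => L p.1 p.2)
      (U ×ˢ {y : Fin n → ℝ | y ≠ 0})) (hx : x ∈ U) :
    ContDiffOn ℝ 2 (L x) {0}ᶜ :=
  (hL.comp (contDiff_const.prodMk contDiff_id).contDiffOn fun _ hz => ⟨hx, hz⟩).of_le
    (WithTop.coe_le_coe.mpr le_top)

lemma of_gten_eq (hL : ContDiffAt ℝ 2 (L x) y) :
    of (fun i j => gten L x i j y) =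
      L x y • hessian (L x) y + vecMulVec (grad (L x) y) (grad (L x) y) :=
  half_smul_hessian_sq hL

lemma of_gten_randersChange_eq (σ : (Fin n → ℝ) → ℝ) (b : (Fin n → ℝ) → (Fin n → ℝ))
    (hL : ContDiffAt ℝ 2 (L x) y) :
    of (fun i j => gten (RandersChange L σ b) x i j y) =
      (exp (σ x) * RandersChange L σ b x y) • hessian (L x) y +
        vecMulVec (exp (σ x) • grad (L x) y + b x) (exp (σ x) • grad (L x) y + b x) := by
  have hlin : ContDiff ℝ 2 fun z => b x ⬝ᵥ z :=
    (dotProductBilin ℝ ℝ (b x)).toContinuousLinearMap.contDiff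
  have hψ : ContDiffAt ℝ 2 (fun z => exp (σ x) * L x z + b x ⬝ᵥ z) y :=
    (contDiffAt_const.mul hL).add hlin.contDiffAt
  rw [show of (fun i j => gten (RandersChange L σ b) x i j y) =
      (1 / 2 : ℝ) • hessian (fun z => (exp (σ x) * L x z + b x ⬝ᵥ z) ^ 2) y from rfl,
    half_smul_hessian_sq hψ, hessian_const_mul_add_dotProduct hL,
    grad_const_mul_add_dotProduct (hL.differentiableAt (by norm_num)), smul_smul, mul_comm]
  rfl

end Finsler

theorem randers_conformal_unit_normal_general
    {n : ℕ} (U : Set (Fin n → ℝ))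
    (L : (Fin n → ℝ) → (Fin n → ℝ) → ℝ)
    (hL : ContDiffOn ℝ (⊤ : ℕ∞)
      (fun p : (Fin n → ℝ) × (Fin n → ℝ) => L p.1 p.2)
      (U ×ˢ {y : Fin n → ℝ | y ≠ 0}))
    (hLpos : ∀ x ∈ U, ∀ y : Fin n → ℝ, y ≠ 0 → 0 < L x y)
    (hLhom : ∀ x ∈ U, ∀ y : Fin n → ℝ, y ≠ 0 → ∀ c : ℝ, 0 < c →
      L x (c • y) = c * L x y)
    (σ : (Fin n → ℝ) → ℝ)
    (b : (Fin n → ℝ) → (Fin n → ℝ))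
    (x : Fin n → ℝ) (hx : x ∈ U) (y : Fin n → ℝ) (hy : y ≠ 0)
    (hLstar : 0 < RandersChange L σ b x y)
    (B : Fin (n - 1) → (Fin n → ℝ)) (v : Fin (n - 1) → ℝ)
    (hyB : y = fun i => ∑ α, v α * B α i)
    (N : Fin n → ℝ)
    (hN1 : ∀ α, ∑ i, ∑ j, gten L x i j y * B α i * N j = 0)
    (hN2 : ∑ i, ∑ j, gten L x i j y * N i * N j = 1)
    (Nstar : Fin n → ℝ)
    (hNstar : Nstar = fun i =>
      N i / Real.sqrt (tauRC L σ b x y + (∑ k, b x k * N k) ^ 2)) :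
    (∑ i, ∑ j, gten (RandersChange L σ b) x i j y * Nstar i * Nstar j = 1) ∧
    ((∀ α, ∑ i, ∑ j, gten (RandersChange L σ b) x i j y * B α i * Nstar j = 0) ↔
      ∑ i, b x i * N i = 0) ∧
    (∑ i, b x i * N i = 0 →
      Nstar = fun i => N i / Real.sqrt (tauRC L σ b x y)) := by
  have hφ : ContDiffOn ℝ 2 (L x) {0}ᶜ := contDiffOn_slice hL hx
  have hφy : ContDiffAt ℝ 2 (L x) y := hφ.contDiffAt (isOpen_compl_singleton.mem_nhds hy)
  have hF : 0 < L x y := hLpos x hx y hy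
  have hy_frame : y = ∑ α, v α • B α := by rw [hyB]; ext i; simp
  have hℓy : y ⬝ᵥ grad (L x) y = L x y :=
    dotProduct_grad_self_of_homogeneous (hφy.differentiableAt (by norm_num)) (hLhom x hx y hy)
  simp only [sum_sum_mul_mul_eq_dotProduct_mulVec] at hN1 hN2 ⊢
  rw [of_gten_eq hφy] at hN1 hN2
  rw [of_gten_randersChange_eq σ b hφy]
  have hℓN : grad (L x) y ⬝ᵥ N = 0 := dotProduct_normal_eq_zero hF.ne'
    (vecMul_hessian_self_of_homogeneous hφ (hLhom x hx) hy) hℓy hy_frame hN1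
  set p := exp (σ x) • grad (L x) y + b x
  have hpN : p ⬝ᵥ N = ∑ i, b x i * N i := by
    rw [add_dotProduct, smul_dotProduct, hℓN, smul_zero, zero_add]; rfl
  have hpy : y ⬝ᵥ p = RandersChange L σ b x y := by
    rw [dotProduct_add, dotProduct_smul, hℓy, dotProduct_comm]; rfl
  have hτ : 0 < tauRC L σ b x y := div_pos (mul_pos (exp_pos _) hLstar) hF
  have hNstar_smul : Nstar = (√(tauRC L σ b x y + (∑ k, b x k * N k) ^ 2))⁻¹ • N := by
    ext i; simp [hNstar, div_eq_inv_mul]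
  obtain ⟨hunit, horth⟩ := unit_normal_of_dotProduct_mulVec_eq hτ
    (fun u => by rw [dotProduct_mulVec_eq_of_dotProduct_eq_zero hF.ne' hℓN _ p u, hpN]; rfl)
    (by rw [dotProduct_comm, hpN]) (hpy.trans_ne hLstar.ne') hy_frame hN1 hN2
  exact ⟨hNstar_smul ▸ hunit, hNstar_smul ▸ horth, fun hQ => by simp [hNstar, hQ]⟩

/-- If `N` is a `g`-unit normal to a tangent frame `B_1, …, B_{n-1}` whose span contains the
supporting element `y`, and `N* = N / √(τ + (b_i N^i)²)`, then `N*` is a `g*`-unit vector;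
moreover `N*` is `g*`-orthogonal to the frame iff `b_i N^i = 0`, in which case
`N* = N/√τ`. -/
theorem randers_conformal_unit_normal
    {n : ℕ} (U : Set (Fin n → ℝ)) (hU : IsOpen U)
    (L : (Fin n → ℝ) → (Fin n → ℝ) → ℝ)
    (hL : ContDiffOn ℝ (⊤ : ℕ∞)
      (fun p : (Fin n → ℝ) × (Fin n → ℝ) => L p.1 p.2)
      (U ×ˢ {y : Fin n → ℝ | y ≠ 0}))
    (hLpos : ∀ x ∈ U, ∀ y : Fin n → ℝ, y ≠ 0 → 0 < L x y)
    (hLhom : ∀ x ∈ U, ∀ y : Fin n → ℝ, y ≠ 0 → ∀ c : ℝ, 0 < c →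
      L x (c • y) = c * L x y)
    (σ : (Fin n → ℝ) → ℝ) (hσ : ContDiffOn ℝ (⊤ : ℕ∞) σ U)
    (b : (Fin n → ℝ) → (Fin n → ℝ)) (hb : ContDiffOn ℝ (⊤ : ℕ∞) b U)
    (x : Fin n → ℝ) (hx : x ∈ U) (y : Fin n → ℝ) (hy : y ≠ 0)
    (hLstar : 0 < RandersChange L σ b x y)
    (B : Fin (n - 1) → (Fin n → ℝ)) (v : Fin (n - 1) → ℝ)
    (hyB : y = fun i => ∑ α, v α * B α i)
    (N : Fin n → ℝ)
    (hN1 : ∀ α, ∑ i, ∑ j, gten L x i j y * B α i * N j = 0)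
    (hN2 : ∑ i, ∑ j, gten L x i j y * N i * N j = 1)
    (Nstar : Fin n → ℝ)
    (hNstar : Nstar = fun i =>
      N i / Real.sqrt (tauRC L σ b x y + (∑ k, b x k * N k) ^ 2)) :
    (∑ i, ∑ j, gten (RandersChange L σ b) x i j y * Nstar i * Nstar j = 1) ∧
    ((∀ α, ∑ i, ∑ j, gten (RandersChange L σ b) x i j y * B α i * Nstar j = 0) ↔
      ∑ i, b x i * N i = 0) ∧
    (∑ i, b x i * N i = 0 →
      Nstar = fun i => N i / Real.sqrt (tauRC L σ b x y)) :=
  randers_conformal_unit_normal_general U L hL hLpos hLhom σ b x hx y hy hLstar B v hyB N hN1 hN2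
    Nstar hNstar
end
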